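/- The antisymmetric matrix J₀(q) = [[0, -1, 0, 0, 0], [1, 0, E, 0, 0], [0, -E, 0, 0, 0], [0, 0, 0, 0, 1], [0, 0, 0, -1, 0]] on ℝ⁵ does not define a Poisson bracket: there exist smooth functions f, g, h (e.g. coordinate functions) for which the bracket {f,g}(q) = ∇f(q)ᵀ J₀(q) ∇g(q) violates the Jacobi identity at some point q. -/

import Mathlib

/-- The gradient of a function on ℝ⁵. -/
noncomputable def grad5 (f : (Fin 5 → ℝ) → ℝ) (q : Fin 5 → ℝ) : Fin 5 → ℝ :=
  fun i => fderiv ℝ f q (Pi.single i 1)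

/-- The antisymmetric matrix J₀(q). -/
noncomputable def J0mat (q : Fin 5 → ℝ) : Matrix (Fin 5) (Fin 5) ℝ :=
  !![0, -1, 0, 0, 0;
     1, 0, q 3, 0, 0;
     0, -q 3, 0, 0, 0;
     0, 0, 0, 0, 1;
     0, 0, 0, -1, 0]

/-- The bracket {f,g}(q) = ∇f(q)ᵀ J₀(q) ∇g(q). -/
noncomputable def pbracket0 (f g : (Fin 5 → ℝ) → ℝ) (q : Fin 5 → ℝ) : ℝ :=
  ∑ i, ∑ j, grad5 f q i * J0mat q i j * grad5 g q j

lemma grad5_coord (i : Fin 5) (q : Fin 5 → ℝ) (j : Fin 5) :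
    grad5 (fun p => p i) q j = if i = j then 1 else 0 := by
  have h : HasFDerivAt (fun p : Fin 5 → ℝ => p i)
      (ContinuousLinearMap.proj (R := ℝ) (φ := fun _ : Fin 5 => ℝ) i) q :=
    hasFDerivAt_apply i q
  simp [grad5, h.fderiv, Pi.single_apply]

/-- The bracket defined by J₀ violates the Jacobi identity: it is not a Poisson
bracket. -/
theorem J0_bracket_not_Poisson :
    ∃ f g h : (Fin 5 → ℝ) → ℝ, ContDiff ℝ (⊤ : ℕ∞) f ∧ ContDiff ℝ (⊤ : ℕ∞) g ∧ ContDiff ℝ (⊤ : ℕ∞) h ∧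
      ∃ q : Fin 5 → ℝ,
        pbracket0 f (pbracket0 g h) q + pbracket0 g (pbracket0 h f) q
          + pbracket0 h (pbracket0 f g) q ≠ 0 := by
  refine ⟨fun p => p 1, fun p => p 2, fun p => p 4,
    (ContinuousLinearMap.proj (R := ℝ) (φ := fun _ : Fin 5 => ℝ) 1).contDiff,
    (ContinuousLinearMap.proj (R := ℝ) (φ := fun _ : Fin 5 => ℝ) 2).contDiff,
    (ContinuousLinearMap.proj (R := ℝ) (φ := fun _ : Fin 5 => ℝ) 4).contDiff, 0, ?_⟩
  have hgh : pbracket0 (fun p => p 2) (fun p => p 4) = fun _ => 0 := by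
    funext q
    simp [pbracket0, Fin.sum_univ_five, grad5_coord, J0mat, Matrix.vecHead, Matrix.vecTail]
  have hhf : pbracket0 (fun p => p 4) (fun p => p 1) = fun _ => 0 := by
    funext q
    simp [pbracket0, Fin.sum_univ_five, grad5_coord, J0mat, Matrix.vecHead, Matrix.vecTail]
  have hfg : pbracket0 (fun p => p 1) (fun p => p 2) = fun q => q 3 := by
    funext q
    simp [pbracket0, Fin.sum_univ_five, grad5_coord, J0mat, Matrix.vecHead, Matrix.vecTail]
  rw [hgh, hhf, hfg]
  have h0 : pbracket0 (fun p => p 1) (fun _ => 0) (0 : Fin 5 → ℝ) = 0 := by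
    simp [pbracket0, grad5, fderiv_const]
  have h0' : pbracket0 (fun p => p 2) (fun _ => 0) (0 : Fin 5 → ℝ) = 0 := by
    simp [pbracket0, grad5, fderiv_const]
  have h3 : pbracket0 (fun p => p 4) (fun q => q 3) (0 : Fin 5 → ℝ) = -1 := by
    simp [pbracket0, Fin.sum_univ_five, grad5_coord, J0mat, Matrix.vecHead, Matrix.vecTail]
  rw [h0, h0', h3]
  norm_num
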